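/- Let ⊗ be a continuous t-norm on [0,1], X a partially ordered compact space, and Φ : CX → [0,1] a map satisfying (Mon), (Act), (Sup) and (Ten)lax. Then: (1) if Φ also satisfies (Top), i.e. Φ(1) = 1, then Zero(Φ) ≠ ∅; (2) if Φ also satisfies (Ten), i.e. Φ(ψ₁⊗ψ₂) = Φ(ψ₁)⊗Φ(ψ₂) for all ψ₁, ψ₂ ∈ CX, then Zero(Φ) is irreducible. -/

import Mathlib

open unitInterval Set

/-- A continuous t-norm on the unit interval `[0,1]`. -/
structure ContinuousTNorm where
  mul : I → I → I
  comm : ∀ x y, mul x y = mul y x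
  assoc : ∀ x y z, mul (mul x y) z = mul x (mul y z)
  mono : ∀ ⦃x₁ x₂ y₁ y₂ : I⦄, x₁ ≤ x₂ → y₁ ≤ y₂ → mul x₁ y₁ ≤ mul x₂ y₂
  continuous : Continuous fun p : I × I => mul p.1 p.2
  one_mul' : ∀ x, mul 1 x = x

/-- The `n`-fold `⊗`-power `xⁿ`. -/
def ContinuousTNorm.pow (T : ContinuousTNorm) (x : I) : ℕ → I
  | 0 => 1
  | n + 1 => T.mul x (T.pow x n)


/-- A continuous antitone (monotone of type `X → [0,1]ᵒᵖ`) map. -/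
structure CMap (X : Type*) [TopologicalSpace X] [Preorder X] where
  toFun : X → I
  continuous' : Continuous toFun
  antitone' : Antitone toFun

namespace CMap

variable {X : Type*} [TopologicalSpace X] [Preorder X]

/-- The constant map `1`. -/
def one : CMap X := ⟨fun _ => 1, continuous_const, fun _ _ _ => le_rfl⟩

/-- Pointwise tensor `ψ₁ ⊗ ψ₂`. -/
def tens (T : ContinuousTNorm) (ψ₁ ψ₂ : CMap X) : CMap X where
  toFun x := T.mul (ψ₁.toFun x) (ψ₂.toFun x)
  continuous' := T.continuous.comp (ψ₁.continuous'.prodMk ψ₂.continuous')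
  antitone' := fun _ _ h => T.mono (ψ₁.antitone' h) (ψ₂.antitone' h)

/-- Pointwise action `u ⊗ ψ` of a scalar `u ∈ [0,1]`. -/
def smul (T : ContinuousTNorm) (u : I) (ψ : CMap X) : CMap X where
  toFun x := T.mul u (ψ.toFun x)
  continuous' := T.continuous.comp (continuous_const.prodMk ψ.continuous')
  antitone' := fun _ _ h => T.mono le_rfl (ψ.antitone' h)

/-- Pointwise binary supremum `ψ₁ ∨ ψ₂`. -/
noncomputable def sup (ψ₁ ψ₂ : CMap X) : CMap X where
  toFun x := max (ψ₁.toFun x) (ψ₂.toFun x)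
  continuous' := ψ₁.continuous'.max ψ₂.continuous'
  antitone' := fun _ _ h => max_le_max (ψ₁.antitone' h) (ψ₂.antitone' h)

/-- Truncated subtraction in `[0,1]`. -/
noncomputable def tsubI (a u : I) : I :=
  ⟨max ((a : ℝ) - u) 0, ⟨le_max_right _ _,
    max_le (by linarith [a.2.2, u.2.1]) zero_le_one⟩⟩

/-- Pointwise truncated subtraction `ψ ⊖ u`. -/
noncomputable def tsub (ψ : CMap X) (u : I) : CMap X where
  toFun x := tsubI (ψ.toFun x) u
  continuous' := by
    apply Continuous.subtype_mk
    exact ((continuous_subtype_val.comp ψ.continuous').sub continuous_const).max continuous_const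
  antitone' := fun a b h =>
    Subtype.mk_le_mk.mpr
      (max_le_max (sub_le_sub_right (Subtype.coe_le_coe.2 (ψ.antitone' h)) _) le_rfl)

end CMap


section Conditions

variable {X : Type*} [TopologicalSpace X] [Preorder X]

/-- `(Mon)`: `Φ` is monotone. -/
def Mon (Φ : CMap X → I) : Prop :=
  ∀ ψ₁ ψ₂ : CMap X, (∀ x, ψ₁.toFun x ≤ ψ₂.toFun x) → Φ ψ₁ ≤ Φ ψ₂

/-- `(Act)`: `Φ(u ⊗ ψ) = u ⊗ Φ(ψ)`. -/
def Act (T : ContinuousTNorm) (Φ : CMap X → I) : Prop :=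
  ∀ (u : I) (ψ : CMap X), Φ (CMap.smul T u ψ) = T.mul u (Φ ψ)

/-- `(Sup)`: `Φ(ψ₁ ∨ ψ₂) = Φ(ψ₁) ∨ Φ(ψ₂)`. -/
def SupC (Φ : CMap X → I) : Prop :=
  ∀ ψ₁ ψ₂ : CMap X, Φ (ψ₁.sup ψ₂) = max (Φ ψ₁) (Φ ψ₂)

/-- `(Ten)lax`: `Φ(ψ₁ ⊗ ψ₂) ≤ Φ(ψ₁) ⊗ Φ(ψ₂)`. -/
def TenLax (T : ContinuousTNorm) (Φ : CMap X → I) : Prop :=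
  ∀ ψ₁ ψ₂ : CMap X, Φ (CMap.tens T ψ₁ ψ₂) ≤ T.mul (Φ ψ₁) (Φ ψ₂)

/-- `(Ten)`: `Φ(ψ₁ ⊗ ψ₂) = Φ(ψ₁) ⊗ Φ(ψ₂)`. -/
def TenC (T : ContinuousTNorm) (Φ : CMap X → I) : Prop :=
  ∀ ψ₁ ψ₂ : CMap X, Φ (CMap.tens T ψ₁ ψ₂) = T.mul (Φ ψ₁) (Φ ψ₂)

/-- `(Top)`: `Φ(1) = 1`. -/
def TopC (Φ : CMap X → I) : Prop := Φ CMap.one = 1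

/-- `(Min)`: `Φ(ψ ⊖ u) = Φ(ψ) ⊖ u`. -/
noncomputable def MinC (Φ : CMap X → I) : Prop :=
  ∀ (u : I) (ψ : CMap X), Φ (ψ.tsub u) = CMap.tsubI (Φ ψ) u

/-- Condition `(A)`. -/
def CondA (Φ : CMap X → I) : Prop :=
  ∀ (x : X) (ψ : CMap X), Φ ψ = 0 → 0 < ψ.toFun x →
    ∃ ψ' : CMap X, ψ'.toFun x = 1 ∧ Φ ψ' = 0

/-- `Zero(Φ) = ⋂ {Zero ψ | Φ ψ = 0}`. -/
def ZeroPhi (Φ : CMap X → I) : Set X := {x | ∀ ψ : CMap X, Φ ψ = 0 → ψ.toFun x = 0}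

/-- `Anti(Φ)`. -/
def AntiPhi (Φ : CMap X → I) : Set X := {x | ∀ ψ : CMap X, ψ.toFun x ≤ Φ ψ}

/-- `Φ_A(ψ) = sup_{x ∈ A} ψ(x)`, with `Φ_∅ = 0`. -/
noncomputable def PhiA (A : Set X) (ψ : CMap X) : I :=
  ⟨sSup ((fun x => (ψ.toFun x : ℝ)) '' A),
   ⟨Real.sSup_nonneg (by rintro r ⟨x, _, rfl⟩; exact (ψ.toFun x).2.1),
    Real.sSup_le (by rintro r ⟨x, _, rfl⟩; exact (ψ.toFun x).2.2) zero_le_one⟩⟩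

end Conditions

/-!
Everything rests on a property of continuous t-norms: if `c ⊗ v = c` and `p ⊗ v = 0` with
`p > 0`, then `c = 0`. The iterated squares of `v` decrease to an idempotent `e` with
`c ⊗ e = c` and `p ⊗ e = 0`; by divisibility an idempotent absorbs everything below it, so
`min p e = min p e ⊗ e ≤ p ⊗ e = 0`, whence `e = 0` and `c = 0`.

By compactness and (Sup), a compact set disjoint from `Zero(Φ)` carries a `Φ`-null map bounded
below by some `δ > 0`; on all of `X` this contradicts (Top). On `{χ ≥ ε}`, for a map `χ`
vanishing on `Zero(Φ)`, a ramp `ν` of that null map has `p ⊗ Φ(ν) = 0` for some `p > 0`, and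
(Ten)lax gives `Φ(χ) ≤ ε ∨ Φ(χ) ⊗ Φ(ν)`, so `Φ(χ) = 0`. For irreducibility pick
`xᵢ ∈ Zero(Φ) \ Aᵢ` and, by the Urysohn–Nachbin lemma, antitone `ψᵢ` vanishing on `Aᵢ` with
`ψᵢ(xᵢ) = 1`. Two consecutive ramps `β, β'` of `ψ₂` satisfy `β' ≤ β' ⊗ β` and `β'(x₂) = 1`,
while `ψ₁ ⊗ β` vanishes on `A₁ ∪ A₂ = Zero(Φ)`; (Ten) then gives `Φ(ψ₁) ⊗ Φ(β) = 0`, so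
`Φ(β') = 0`, contradicting `x₂ ∈ Zero(Φ)`.
-/

open Filter Topology

namespace ContinuousTNorm

variable (T : ContinuousTNorm)

theorem mul_one' (x : I) : T.mul x 1 = x := by rw [T.comm]; exact T.one_mul' x

theorem mul_le_left (x y : I) : T.mul x y ≤ x :=
  (T.mono le_rfl (le_one' : y ≤ 1)).trans_eq (T.mul_one' x)

theorem mul_le_right (x y : I) : T.mul x y ≤ y := T.comm y x ▸ T.mul_le_left y x

theorem zero_mul' (x : I) : T.mul 0 x = 0 := le_antisymm (T.mul_le_left 0 x) nonneg'

theorem mul_zero' (x : I) : T.mul x 0 = 0 := le_antisymm (T.mul_le_right x 0) nonneg'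

theorem tendsto_mul {α : Type*} {l : Filter α} {f g : α → I} {a b : I} (hf : Tendsto f l (𝓝 a))
    (hg : Tendsto g l (𝓝 b)) : Tendsto (fun n => T.mul (f n) (g n)) l (𝓝 (T.mul a b)) :=
  (T.continuous.tendsto (a, b)).comp (hf.prodMk_nhds hg)

theorem exists_mul_eq {a t : I} (h : t ≤ a) : ∃ s, T.mul a s = t := by
  have hc : Continuous fun s => T.mul a s :=
    T.continuous.comp (continuous_const.prodMk continuous_id)
  have := intermediate_value_univ 0 1 hc
  rw [T.mul_zero', T.mul_one'] at this
  exact this ⟨nonneg', h⟩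

theorem mul_eq_left_of_le {e t : I} (he : T.mul e e = e) (h : t ≤ e) : T.mul t e = t := by
  obtain ⟨s, rfl⟩ := T.exists_mul_eq h
  rw [T.comm _ e, ← T.assoc, he]

theorem eq_zero_or_eq_zero_of_mul_eq_zero {a e : I} (he : T.mul e e = e) (hae : T.mul a e = 0) :
    a = 0 ∨ e = 0 := by
  have hmin : min a e = 0 := by
    refine le_antisymm ?_ nonneg'
    calc min a e = T.mul (min a e) e := (T.mul_eq_left_of_le he (min_le_right a e)).symm
      _ ≤ T.mul a e := T.mono (min_le_left a e) le_rfl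
      _ = 0 := hae
  rcases min_choice a e with h | h <;> rw [h] at hmin <;> simp [hmin]

theorem exists_idempotent_le_of_mul_eq_self {c v : I} (hc : T.mul c v = c) :
    ∃ e, T.mul e e = e ∧ e ≤ v ∧ T.mul c e = c := by
  set w : ℕ → I := fun n => (fun x => T.mul x x)^[n] v
  have hw_succ : ∀ n, w (n + 1) = T.mul (w n) (w n) := fun n => Function.iterate_succ_apply' _ n v
  have hw_anti : Antitone w :=
    antitone_nat_of_succ_le fun n => (hw_succ n).trans_le (T.mul_le_left _ _)
  have hw_lim : Tendsto w atTop (𝓝 (⨅ n, w n)) := tendsto_atTop_iInf hw_anti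
  have hcw : ∀ n, T.mul c (w n) = c := by
    intro n
    induction n with
    | zero => exact hc
    | succ n ih => rw [hw_succ, ← T.assoc, ih, ih]
  refine ⟨⨅ n, w n, ?_, iInf_le w 0, ?_⟩
  · exact tendsto_nhds_unique (T.tendsto_mul hw_lim hw_lim)
      (Tendsto.congr hw_succ (hw_lim.comp (tendsto_add_atTop_nat 1)))
  · have := T.tendsto_mul (tendsto_const_nhds (x := c)) hw_lim
    simp only [hcw] at this
    exact tendsto_nhds_unique this tendsto_const_nhds

theorem eq_zero_of_mul_eq_self {c v p : I} (hc : T.mul c v = c) (hpv : T.mul p v = 0)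
    (hp : 0 < p) : c = 0 := by
  obtain ⟨e, he, hev, hce⟩ := T.exists_idempotent_le_of_mul_eq_self hc
  have hpe : T.mul p e = 0 := le_antisymm ((T.mono le_rfl hev).trans_eq hpv) nonneg'
  rcases T.eq_zero_or_eq_zero_of_mul_eq_zero he hpe with h | h
  · exact absurd h hp.ne'
  · rw [← hce, h, T.mul_zero']

end ContinuousTNorm

namespace CMap

variable {X : Type*} [TopologicalSpace X] [Preorder X]

noncomputable def ramp (φ : CMap X) (p q : I) (hpq : p < q) : CMap X where
  toFun x := projIcc 0 1 zero_le_one (((φ.toFun x : ℝ) - p) / ((q : ℝ) - p))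
  continuous' := continuous_projIcc.comp
    (((continuous_subtype_val.comp φ.continuous').sub continuous_const).div_const _)
  antitone' _ _ h := monotone_projIcc zero_le_one <| div_le_div_of_nonneg_right
    (sub_le_sub_right (Subtype.coe_le_coe.2 (φ.antitone' h)) _) (sub_nonneg.2 hpq.le)

variable {φ : CMap X} {p q : I} {x : X}

theorem ramp_eq_zero (hpq : p < q) (h : φ.toFun x ≤ p) : (φ.ramp p q hpq).toFun x = 0 :=
  projIcc_of_le_left zero_le_one <| div_nonpos_of_nonpos_of_nonneg
    (sub_nonpos.2 (Subtype.coe_le_coe.2 h)) (sub_nonneg.2 (Subtype.coe_le_coe.2 hpq.le))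

theorem ramp_eq_one (hpq : p < q) (h : q ≤ φ.toFun x) : (φ.ramp p q hpq).toFun x = 1 :=
  projIcc_of_right_le zero_le_one <| (one_le_div (sub_pos.2 (Subtype.coe_lt_coe.2 hpq))).2
    (sub_le_sub_right (Subtype.coe_le_coe.2 h) _)

theorem mul_ramp_le (T : ContinuousTNorm) (hpq : p < q) (x : X) :
    T.mul p ((φ.ramp p q hpq).toFun x) ≤ φ.toFun x := by
  rcases le_total (φ.toFun x) p with h | h
  · rw [ramp_eq_zero hpq h, T.mul_zero']
    exact nonneg'
  · exact (T.mul_le_left _ _).trans h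

theorem ramp_le_mul_ramp (T : ContinuousTNorm) {r : I} (hpq : p < q) (hqr : q < r) (x : X) :
    (φ.ramp q r hqr).toFun x ≤
      T.mul ((φ.ramp q r hqr).toFun x) ((φ.ramp p q hpq).toFun x) := by
  rcases le_total (φ.toFun x) q with h | h
  · rw [ramp_eq_zero hqr h, T.zero_mul']
  · rw [ramp_eq_one hpq h, T.mul_one']

end CMap

namespace Urysohns.CU

variable {X : Type*} [TopologicalSpace X] [Preorder X]

theorem antitone_approx (n : ℕ) (c : CU fun _ u : Set X => IsUpperSet u) :
    Antitone (c.approx n) := by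
  induction n generalizing c with
  | zero =>
    intro x y hxy
    by_cases hy : y ∈ c.U
    · have hy0 : c.approx 0 y = 0 := indicator_of_notMem (not_not.2 hy) _
      exact hy0.trans_le (c.approx_nonneg 0 x)
    · rw [c.approx_of_notMem_U 0 fun hx => hy (c.P_C_U hxy hx)]
      exact c.approx_le_one 0 y
  | succ n ih => exact fun x y hxy => midpoint_le_midpoint (ih c.left hxy) (ih c.right hxy)

theorem antitone_lim (c : CU fun _ u : Set X => IsUpperSet u) : Antitone c.lim :=
  fun _ _ hxy => ciSup_mono (c.bddAbove_range_approx _) fun n => c.antitone_approx n hxy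

end Urysohns.CU

section UrysohnNachbin

variable {X : Type*} [TopologicalSpace X] [PartialOrder X] [CompactSpace X]
  [OrderClosedTopology X]

theorem IsClosed.upperClosure_of_compactSpace {s : Set X} (hs : IsClosed s) :
    IsClosed (upperClosure s : Set X) := by
  have : (upperClosure s : Set X) = Prod.snd '' ({p : X × X | p.1 ≤ p.2} ∩ s ×ˢ univ) := by
    ext x
    simp [mem_upperClosure, and_comm]
  rw [this]
  exact ((isClosed_le_prod.inter (hs.prod isClosed_univ)).isCompact.image continuous_snd).isClosed

theorem IsClosed.lowerClosure_of_compactSpace {s : Set X} (hs : IsClosed s) :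
    IsClosed (lowerClosure s : Set X) :=
  have : CompactSpace Xᵒᵈ := ‹CompactSpace X›
  IsClosed.upperClosure_of_compactSpace (X := Xᵒᵈ) hs

theorem exists_isOpen_isUpperSet_closure_subset {c u : Set X} (hc : IsClosed c) (hu : IsOpen u)
    (hu' : IsUpperSet u) (hcu : c ⊆ u) :
    ∃ v, IsOpen v ∧ IsUpperSet v ∧ c ⊆ v ∧ closure v ⊆ u := by
  obtain ⟨v, hv, hcv, hvu⟩ :=
    normal_exists_closure_subset hc.upperClosure_of_compactSpace hu (upperClosure_min hcu hu')
  refine ⟨(lowerClosure vᶜ : Set X)ᶜ, hv.isClosed_compl.lowerClosure_of_compactSpace.isOpen_compl,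
    (lowerClosure vᶜ).lower.compl, ?_, (closure_mono ?_).trans hvu⟩
  · rintro x hx ⟨y, hy, hxy⟩
    exact hy (hcv ⟨x, hx, hxy⟩)
  · exact compl_subset_comm.1 subset_lowerClosure

theorem CMap.exists_eq_zero_on_eq_one_on {A B : Set X} (hA : IsClosed A) (hB : IsClosed B)
    (hBl : IsLowerSet B) (hAB : Disjoint A B) :
    ∃ ψ : CMap X, (∀ x ∈ A, ψ.toFun x = 0) ∧ ∀ x ∈ B, ψ.toFun x = 1 := by
  let c : Urysohns.CU fun _ u : Set X => IsUpperSet u :=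
    { C := A
      U := Bᶜ
      P_C_U := hBl.compl
      closed_C := hA
      open_U := hB.isOpen_compl
      subset := disjoint_left.1 hAB
      hP := by
        rintro c u hc hu huo hcu
        obtain ⟨v, hvo, hvu, hcv, hvu'⟩ := exists_isOpen_isUpperSet_closure_subset hc huo hu hcu
        exact ⟨v, hvo, hcv, hvu', hvu, hu⟩ }
  refine ⟨⟨fun x => ⟨c.lim x, c.lim_mem_Icc x⟩, c.continuous_lim.subtype_mk _,
    fun _ _ hxy => Subtype.mk_le_mk.2 (c.antitone_lim hxy)⟩,
    fun x hx => Subtype.ext (c.lim_of_mem_C x hx),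
    fun x hx => Subtype.ext (c.lim_of_notMem_U x (not_not.2 hx))⟩

theorem CMap.exists_eq_zero_on_eq_one_at {A : Set X} (hA : IsClosed A) (hAu : IsUpperSet A)
    {b : X} (hb : b ∉ A) : ∃ ψ : CMap X, (∀ x ∈ A, ψ.toFun x = 0) ∧ ψ.toFun b = 1 := by
  obtain ⟨ψ, hψA, hψb⟩ := CMap.exists_eq_zero_on_eq_one_on hA isClosed_Iic (isLowerSet_Iic b)
    (disjoint_left.2 fun _ hx hxb => hb (hAu hxb hx))
  exact ⟨ψ, hψA, hψb b le_rfl⟩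

end UrysohnNachbin

section Functional

variable {X : Type*} [TopologicalSpace X] [Preorder X] {T : ContinuousTNorm} {Φ : CMap X → I}

theorem exists_map_eq_zero_upper_bound (hAct : Act T Φ) (hSup : SupC Φ) {ι : Type*}
    (F : ι → CMap X) (s : Finset ι) (hF : ∀ i ∈ s, Φ (F i) = 0) :
    ∃ φ : CMap X, Φ φ = 0 ∧ ∀ i ∈ s, ∀ x, (F i).toFun x ≤ φ.toFun x := by
  induction s using Finset.cons_induction with
  | empty => exact ⟨CMap.smul T 0 CMap.one, by rw [hAct, T.zero_mul'], by simp⟩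
  | cons i s hi ih =>
    obtain ⟨φ, hφ, hFφ⟩ := ih fun j hj => hF j (Finset.mem_cons_of_mem hj)
    refine ⟨(F i).sup φ, by rw [hSup, hφ, hF i (Finset.mem_cons_self i s), max_self], ?_⟩
    intro j hj x
    rcases Finset.mem_cons.1 hj with rfl | hj
    · exact le_max_left _ _
    · exact (hFφ j hj x).trans (le_max_right _ _)

theorem exists_map_eq_zero_pos_on (hAct : Act T Φ) (hSup : SupC Φ) {K : Set X}
    (hK : IsCompact K) (hKZ : Disjoint K (ZeroPhi Φ)) :
    ∃ φ : CMap X, Φ φ = 0 ∧ ∀ x ∈ K, 0 < φ.toFun x := by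
  have hwit : ∀ x ∈ K, ∃ ψ : CMap X, Φ ψ = 0 ∧ 0 < ψ.toFun x := by
    intro x hx
    simpa [ZeroPhi, pos_iff_ne_zero] using disjoint_left.1 hKZ hx
  have : Nonempty (CMap X) := ⟨CMap.one⟩
  choose! F hF hFx using hwit
  obtain ⟨t, htK, hKt⟩ := hK.elim_nhds_subcover (fun x => {y | 0 < (F x).toFun y})
    fun x hx => (isOpen_lt continuous_const (F x).continuous').mem_nhds (hFx x hx)
  obtain ⟨φ, hφ, hFφ⟩ :=
    exists_map_eq_zero_upper_bound hAct hSup F t fun i hi => hF i (htK i hi)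
  refine ⟨φ, hφ, fun y hy => ?_⟩
  obtain ⟨x, hxt, hxy⟩ := mem_iUnion₂.1 (hKt hy)
  exact hxy.trans_le (hFφ x hxt y)

theorem exists_map_eq_zero_ge_on (hAct : Act T Φ) (hSup : SupC Φ) {K : Set X}
    (hK : IsCompact K) (hKZ : Disjoint K (ZeroPhi Φ)) :
    ∃ φ : CMap X, Φ φ = 0 ∧ ∃ δ : I, 0 < δ ∧ ∀ x ∈ K, δ ≤ φ.toFun x := by
  obtain ⟨φ, hφ, hpos⟩ := exists_map_eq_zero_pos_on hAct hSup hK hKZ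
  rcases K.eq_empty_or_nonempty with rfl | hne
  · exact ⟨φ, hφ, 1, zero_lt_one, by simp⟩
  · obtain ⟨x₀, hx₀, hmin⟩ := hK.exists_isMinOn hne φ.continuous'.continuousOn
    exact ⟨φ, hφ, φ.toFun x₀, hpos x₀ hx₀, hmin⟩

theorem zeroPhi_nonempty [CompactSpace X] (hMon : Mon Φ) (hAct : Act T Φ) (hSup : SupC Φ)
    (hTop : TopC Φ) : (ZeroPhi Φ).Nonempty := by
  by_contra h
  obtain ⟨φ, hφ, δ, hδ, hδφ⟩ := exists_map_eq_zero_ge_on hAct hSup isCompact_univ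
    (univ_disjoint.2 (not_nonempty_iff_eq_empty.1 h))
  have : δ ≤ 0 := calc
    δ = Φ (CMap.smul T δ CMap.one) := by rw [hAct, hTop, T.mul_one']
    _ ≤ Φ φ := hMon _ _ fun x => (T.mul_one' δ).trans_le (hδφ x (mem_univ x))
    _ = 0 := hφ
  exact hδ.not_ge this

theorem map_eq_zero_of_forall_mem_zeroPhi [CompactSpace X] (hMon : Mon Φ) (hAct : Act T Φ)
    (hSup : SupC Φ) (hTen : TenLax T Φ) {χ : CMap X} (hχ : ∀ x ∈ ZeroPhi Φ, χ.toFun x = 0) :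
    Φ χ = 0 := by
  refine le_antisymm (le_of_forall_gt_imp_ge_of_dense fun ε hε => ?_) nonneg'
  set K := {x | ε ≤ χ.toFun x}
  have hK : IsCompact K := (isClosed_le continuous_const χ.continuous').isCompact
  have hKZ : Disjoint K (ZeroPhi Φ) :=
    disjoint_left.2 fun x hxK hxZ => hε.not_ge (hxK.trans_eq (hχ x hxZ))
  obtain ⟨φ, hφ, δ, hδ, hδφ⟩ := exists_map_eq_zero_ge_on hAct hSup hK hKZ
  obtain ⟨p, hp, hpδ⟩ := exists_between hδ
  set ν := φ.ramp p δ hpδ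
  have hpν : T.mul p (Φ ν) = 0 := by
    rw [← hAct]
    exact le_antisymm (hφ ▸ hMon _ _ (CMap.mul_ramp_le T hpδ)) nonneg'
  have hχ_le : ∀ x, χ.toFun x ≤ ((CMap.smul T ε CMap.one).sup (CMap.tens T χ ν)).toFun x := by
    intro x
    by_cases hx : ε ≤ χ.toFun x
    · show χ.toFun x ≤ max (T.mul ε 1) (T.mul (χ.toFun x) (ν.toFun x))
      rw [CMap.ramp_eq_one hpδ (hδφ x hx)]
      exact le_max_of_le_right (T.mul_one' _).ge
    · exact (not_le.1 hx).le.trans ((T.mul_one' ε).symm.trans_le (le_max_left _ _))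
  have hΦχ : Φ χ ≤ max ε (T.mul (Φ χ) (Φ ν)) := calc
    Φ χ ≤ Φ ((CMap.smul T ε CMap.one).sup (CMap.tens T χ ν)) := hMon _ _ hχ_le
    _ = max (T.mul ε (Φ CMap.one)) (Φ (CMap.tens T χ ν)) := by rw [hSup, hAct]
    _ ≤ max ε (T.mul (Φ χ) (Φ ν)) := max_le_max (T.mul_le_left _ _) (hTen χ ν)
  rcases le_max_iff.1 hΦχ with h | h
  · exact h
  · rw [T.eq_zero_of_mul_eq_self (le_antisymm (T.mul_le_left _ _) h) hpν hp]
    exact nonneg'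

end Functional

theorem zeroPhi_eq_or_eq_of_union_eq {X : Type*} [TopologicalSpace X] [PartialOrder X]
    [CompactSpace X] [OrderClosedTopology X] {T : ContinuousTNorm} {Φ : CMap X → I}
    (hMon : Mon Φ) (hAct : Act T Φ) (hSup : SupC Φ) (hTenC : TenC T Φ) {A₁ A₂ : Set X} (hA₁ : IsClosed A₁) (hA₁u : IsUpperSet A₁) (hA₂ : IsClosed A₂)
    (hA₂u : IsUpperSet A₂) (hA : A₁ ∪ A₂ = ZeroPhi Φ) : ZeroPhi Φ = A₁ ∨ ZeroPhi Φ = A₂ := by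
  have hTen : TenLax T Φ := fun ψ ψ' => (hTenC ψ ψ').le
  by_contra! h
  obtain ⟨x₁, hx₁Z, hx₁⟩ := not_subset.1 fun hs => h.1 (hs.antisymm (hA ▸ subset_union_left))
  obtain ⟨x₂, hx₂Z, hx₂⟩ := not_subset.1 fun hs => h.2 (hs.antisymm (hA ▸ subset_union_right))
  obtain ⟨ψ₁, hψ₁A, hψ₁x⟩ := CMap.exists_eq_zero_on_eq_one_at hA₁ hA₁u hx₁
  obtain ⟨ψ₂, hψ₂A, hψ₂x⟩ := CMap.exists_eq_zero_on_eq_one_at hA₂ hA₂u hx₂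
  obtain ⟨m, hm0, hm1⟩ := exists_between (zero_lt_one' I)
  set β := ψ₂.ramp 0 m hm0
  set β' := ψ₂.ramp m 1 hm1
  have hψ₁ : 0 < Φ ψ₁ := pos_iff_ne_zero.2 fun h0 => one_ne_zero (hψ₁x.symm.trans (hx₁Z ψ₁ h0))
  have hψ₁β : T.mul (Φ ψ₁) (Φ β) = 0 := by
    rw [← hTenC]
    refine map_eq_zero_of_forall_mem_zeroPhi hMon hAct hSup hTen fun x hx => ?_
    show T.mul (ψ₁.toFun x) (β.toFun x) = 0
    rcases hA ▸ hx with hx | hx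
    · rw [hψ₁A x hx, T.zero_mul']
    · rw [CMap.ramp_eq_zero hm0 (hψ₂A x hx).le, T.mul_zero']
  have hβ' : T.mul (Φ β') (Φ β) = Φ β' :=
    le_antisymm (T.mul_le_left _ _) ((hMon _ _ (CMap.ramp_le_mul_ramp T hm0 hm1)).trans (hTen _ _))
  have hβ'x₂ := hx₂Z β' (T.eq_zero_of_mul_eq_self hβ' hψ₁β hψ₁)
  rw [CMap.ramp_eq_one hm1 hψ₂x.ge] at hβ'x₂
  exact one_ne_zero hβ'x₂

theorem zeroPhi_nonempty_and_irreducible_general (T : ContinuousTNorm) {X : Type*} [TopologicalSpace X] [CompactSpace X]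
    [PartialOrder X] (hle : IsClosed {p : X × X | p.1 ≤ p.2})
    (Φ : CMap X → I) (hMon : Mon Φ) (hAct : Act T Φ) (hSup : SupC Φ) :
    (TopC Φ → (ZeroPhi Φ).Nonempty) ∧
    (TenC T Φ → ∀ A₁ A₂ : Set X, IsClosed A₁ → IsUpperSet A₁ → IsClosed A₂ →
      IsUpperSet A₂ → A₁ ∪ A₂ = ZeroPhi Φ → ZeroPhi Φ = A₁ ∨ ZeroPhi Φ = A₂) := by
  have : OrderClosedTopology X := ⟨hle⟩
  exact ⟨zeroPhi_nonempty hMon hAct hSup, fun hTenC _ _ hA₁ hA₁u hA₂ hA₂u hA =>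
    zeroPhi_eq_or_eq_of_union_eq hMon hAct hSup hTenC hA₁ hA₁u hA₂ hA₂u hA⟩

/-- If `Φ` satisfies `(Mon)`, `(Act)`, `(Sup)` and `(Ten)lax`, then `(Top)` forces
`Zero(Φ)` to be nonempty, and `(Ten)` forces `Zero(Φ)` to be irreducible. -/
theorem zeroPhi_nonempty_and_irreducible (T : ContinuousTNorm) {X : Type*} [TopologicalSpace X] [CompactSpace X]
    [PartialOrder X] (hle : IsClosed {p : X × X | p.1 ≤ p.2})
    (Φ : CMap X → I) (hMon : Mon Φ) (hAct : Act T Φ) (hSup : SupC Φ) (hTen : TenLax T Φ) :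
    (TopC Φ → (ZeroPhi Φ).Nonempty) ∧
    (TenC T Φ → ∀ A₁ A₂ : Set X, IsClosed A₁ → IsUpperSet A₁ → IsClosed A₂ →
      IsUpperSet A₂ → A₁ ∪ A₂ = ZeroPhi Φ → ZeroPhi Φ = A₁ ∨ ZeroPhi Φ = A₂) :=
  zeroPhi_nonempty_and_irreducible_general T hle Φ hMon hAct hSup
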